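/- Let (w,u,v) be a smooth solution of the dB system and let (ψ^w, ψ^u, ψ^v) be a cosymmetry characteristic along (w,u,v). Then the triple H₁ψ := (∂_x ψ^v, ∂_x ψ^u, ∂_x ψ^w − 4w·∂_x ψ^v − 2w_x·ψ^v) is a symmetry characteristic along (w,u,v). (This expresses that the operator H₁ = (0,0,D_x; 0,D_x,0; D_x,0,−4D_x∘w − 2w_x) maps cosymmetries of the dB equation to symmetries.) -/

import Mathlib

/-- Partial derivative with respect to the first variable `x`. -/
noncomputable def pdx (f : ℝ → ℝ → ℝ) (x t : ℝ) : ℝ := deriv (fun x' => f x' t) x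

/-- Partial derivative with respect to the second variable `t`. -/
noncomputable def pdt (f : ℝ → ℝ → ℝ) (x t : ℝ) : ℝ := deriv (fun t' => f x t') t

/-- A function of two real variables is smooth. -/
def Smooth2 (f : ℝ → ℝ → ℝ) : Prop := ContDiff ℝ (⊤ : ℕ∞) (Function.uncurry f)

/-- The dispersionless Boussinesq (dB) system:
`w_t = u_x`, `u_t = w·w_x + v_x`, `v_t = −u·w_x − 3w·u_x`. -/
def IsDBSolution (w u v : ℝ → ℝ → ℝ) : Prop :=
  (∀ x t, pdt w x t = pdx u x t) ∧
  (∀ x t, pdt u x t = w x t * pdx w x t + pdx v x t) ∧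
  (∀ x t, pdt v x t = -(u x t * pdx w x t) - 3 * w x t * pdx u x t)

/-- A symmetry characteristic of the dB system along the solution `(w,u,v)`:
a solution of the linearized system. -/
def IsSymmetryChar (w u v φw φu φv : ℝ → ℝ → ℝ) : Prop :=
  (∀ x t, pdt φw x t = pdx φu x t) ∧
  (∀ x t, pdt φu x t = w x t * pdx φw x t + pdx w x t * φw x t + pdx φv x t) ∧
  (∀ x t, pdt φv x t = -(u x t * pdx φw x t) - 3 * pdx u x t * φw x t
      - 3 * w x t * pdx φu x t - pdx w x t * φu x t)

/-- A cosymmetry characteristic of the dB system along the solution `(w,u,v)`: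
a solution of the adjoint linearized system. -/
def IsCosymmetryChar (w u _v ψw ψu ψv : ℝ → ℝ → ℝ) : Prop :=
  (∀ x t, pdt ψw x t = w x t * pdx ψu x t - u x t * pdx ψv x t
      + 2 * pdx u x t * ψv x t) ∧
  (∀ x t, pdt ψu x t = pdx ψw x t - 3 * w x t * pdx ψv x t - 2 * pdx w x t * ψv x t) ∧
  (∀ x t, pdt ψv x t = pdx ψu x t)


open Function

variable {f g : ℝ → ℝ → ℝ}

lemma Smooth2.slice_x (hf : Smooth2 f) (t : ℝ) : ContDiff ℝ (⊤ : ℕ∞) (fun x' => f x' t) :=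
  hf.comp (contDiff_id.prodMk contDiff_const)
lemma Smooth2.slice_t (hf : Smooth2 f) (x : ℝ) : ContDiff ℝ (⊤ : ℕ∞) (fun t' => f x t') :=
  hf.comp (contDiff_const.prodMk contDiff_id)
lemma Smooth2.hasDerivAt_x (hf : Smooth2 f) (x t : ℝ) :
    HasDerivAt (fun x' => f x' t) (pdx f x t) x :=
  (((hf.slice_x t).differentiable (by simp)) x).hasDerivAt
lemma Smooth2.hasDerivAt_t (hf : Smooth2 f) (x t : ℝ) :
    HasDerivAt (fun t' => f x t') (pdt f x t) t :=
  (((hf.slice_t x).differentiable (by simp)) t).hasDerivAt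
lemma pdx_eq_fderiv (hf : Smooth2 f) (x t : ℝ) :
    pdx f x t = fderiv ℝ (uncurry f) (x, t) (1, 0) := by
  have hF : HasFDerivAt (uncurry f) (fderiv ℝ (uncurry f) (x, t)) (x, t) :=
    ((hf.differentiable (by simp)) (x, t)).hasFDerivAt
  have hg : HasDerivAt (fun x' : ℝ => ((x' : ℝ), t)) (((1:ℝ), (0:ℝ))) x :=
    (hasDerivAt_id x).prodMk (hasDerivAt_const x t)
  exact (hF.comp_hasDerivAt x hg).deriv
lemma pdt_eq_fderiv (hf : Smooth2 f) (x t : ℝ) :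
    pdt f x t = fderiv ℝ (uncurry f) (x, t) (0, 1) := by
  have hF : HasFDerivAt (uncurry f) (fderiv ℝ (uncurry f) (x, t)) (x, t) :=
    ((hf.differentiable (by simp)) (x, t)).hasFDerivAt
  have hg : HasDerivAt (fun t' : ℝ => ((x : ℝ), t')) (((0:ℝ), (1:ℝ))) t :=
    (hasDerivAt_const t x).prodMk (hasDerivAt_id t)
  exact (hF.comp_hasDerivAt t hg).deriv
lemma Smooth2.pdx (hf : Smooth2 f) : Smooth2 (pdx f) := by
  have h1 : ContDiff ℝ (⊤ : ℕ∞) (fun p : ℝ × ℝ => fderiv ℝ (uncurry f) p ((1:ℝ), (0:ℝ))) :=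
    (hf.fderiv_right (by simp)).clm_apply contDiff_const
  have h2 : uncurry (_root_.pdx f) = fun p : ℝ × ℝ => fderiv ℝ (uncurry f) p ((1:ℝ), (0:ℝ)) := by
    funext p; exact pdx_eq_fderiv hf p.1 p.2
  rw [Smooth2, h2]; exact h1
lemma Smooth2.pdt (hf : Smooth2 f) : Smooth2 (pdt f) := by
  have h1 : ContDiff ℝ (⊤ : ℕ∞) (fun p : ℝ × ℝ => fderiv ℝ (uncurry f) p ((0:ℝ), (1:ℝ))) :=
    (hf.fderiv_right (by simp)).clm_apply contDiff_const
  have h2 : uncurry (_root_.pdt f) = fun p : ℝ × ℝ => fderiv ℝ (uncurry f) p ((0:ℝ), (1:ℝ)) := by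
    funext p; exact pdt_eq_fderiv hf p.1 p.2
  rw [Smooth2, h2]; exact h1
lemma fderiv_apply_const (hf : Smooth2 f) (q : ℝ × ℝ) (c v : ℝ × ℝ) :
    fderiv ℝ (fun p : ℝ × ℝ => fderiv ℝ (uncurry f) p c) q v
      = fderiv ℝ (fderiv ℝ (uncurry f)) q v c := by
  rw [fderiv_clm_apply (((hf.fderiv_right (m := (⊤ : ℕ∞)) (by simp)).differentiable (by simp)) q)
    (differentiableAt_const c)]
  simp
lemma pdt_pdx_comm (hf : Smooth2 f) (x t : ℝ) : pdt (pdx f) x t = pdx (pdt f) x t := by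
  have hsym : IsSymmSndFDerivAt ℝ (uncurry f) (x, t) :=
    hf.contDiffAt.isSymmSndFDerivAt (by rw [minSmoothness_of_isRCLikeNormedField]; exact WithTop.coe_le_coe.mpr le_top)
  have e1 : uncurry (pdx f) = fun p : ℝ × ℝ => fderiv ℝ (uncurry f) p ((1:ℝ), (0:ℝ)) := by
    funext p; exact pdx_eq_fderiv hf p.1 p.2
  have e2 : uncurry (pdt f) = fun p : ℝ × ℝ => fderiv ℝ (uncurry f) p ((0:ℝ), (1:ℝ)) := by
    funext p; exact pdt_eq_fderiv hf p.1 p.2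
  rw [pdt_eq_fderiv hf.pdx x t, pdx_eq_fderiv hf.pdt x t, e1, e2,
    fderiv_apply_const hf, fderiv_apply_const hf]
  exact hsym _ _

/-- the Hamiltonian operator
`H₁ = (0,0,D_x; 0,D_x,0; D_x,0,−4D_x∘w − 2w_x)` maps cosymmetries of the
dB equation to symmetries. -/
theorem dB_H1_maps_cosym_to_sym (w u v ψw ψu ψv : ℝ → ℝ → ℝ)
    (hw : Smooth2 w) (hu : Smooth2 u) (hv : Smooth2 v)
    (hψw : Smooth2 ψw) (hψu : Smooth2 ψu) (hψv : Smooth2 ψv)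
    (hsol : IsDBSolution w u v)
    (hψ : IsCosymmetryChar w u v ψw ψu ψv) :
    IsSymmetryChar w u v
      (fun x t => pdx ψv x t)
      (fun x t => pdx ψu x t)
      (fun x t => pdx ψw x t - 4 * w x t * pdx ψv x t
        - 2 * pdx w x t * ψv x t) := by
  obtain ⟨hdb1, hdb2, hdb3⟩ := hsol
  obtain ⟨hc1, hc2, hc3⟩ := hψ
  -- pointwise funext versions
  have fc1 : pdt ψw = fun x t => w x t * pdx ψu x t - u x t * pdx ψv x t
      + 2 * pdx u x t * ψv x t := by funext a b; exact hc1 a b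
  have fc2 : pdt ψu = fun x t => pdx ψw x t - 3 * w x t * pdx ψv x t
      - 2 * pdx w x t * ψv x t := by funext a b; exact hc2 a b
  have fc3 : pdt ψv = pdx ψu := by funext a b; exact hc3 a b
  have fdb1 : pdt w = pdx u := by funext a b; exact hdb1 a b
  refine ⟨?_, ?_, ?_⟩
  · intro x t
    show pdt (pdx ψv) x t = pdx (pdx ψu) x t
    rw [pdt_pdx_comm hψv, fc3]
  · intro x t
    show pdt (pdx ψu) x t = _
    rw [pdt_pdx_comm hψu, fc2]
    -- expand pdx of the cosymmetry RHS
    have E1 : pdx (fun x t => pdx ψw x t - 3 * w x t * pdx ψv x t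
        - 2 * pdx w x t * ψv x t) x t = _ :=
      (((hψw.pdx.hasDerivAt_x x t).sub
        (((hw.hasDerivAt_x x t).const_mul 3).mul (hψv.pdx.hasDerivAt_x x t))).sub
        (((hw.pdx.hasDerivAt_x x t).const_mul 2).mul (hψv.hasDerivAt_x x t))).deriv
    have E2 : pdx (fun x t => pdx ψw x t - 4 * w x t * pdx ψv x t
        - 2 * pdx w x t * ψv x t) x t = _ :=
      (((hψw.pdx.hasDerivAt_x x t).sub
        (((hw.hasDerivAt_x x t).const_mul 4).mul (hψv.pdx.hasDerivAt_x x t))).sub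
        (((hw.pdx.hasDerivAt_x x t).const_mul 2).mul (hψv.hasDerivAt_x x t))).deriv
    rw [E1, E2]
    ring
  · intro x t
    show pdt (fun x t => pdx ψw x t - 4 * w x t * pdx ψv x t - 2 * pdx w x t * ψv x t) x t = _
    have E3 : pdt (fun x t => pdx ψw x t - 4 * w x t * pdx ψv x t
        - 2 * pdx w x t * ψv x t) x t = _ :=
      (((hψw.pdx.hasDerivAt_t x t).sub
        (((hw.hasDerivAt_t x t).const_mul 4).mul (hψv.pdx.hasDerivAt_t x t))).sub
        (((hw.pdx.hasDerivAt_t x t).const_mul 2).mul (hψv.hasDerivAt_t x t))).deriv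
    rw [E3]
    -- substitute time derivatives
    have s1 : pdt (pdx ψw) x t = pdx (fun x t => w x t * pdx ψu x t - u x t * pdx ψv x t
        + 2 * pdx u x t * ψv x t) x t := by rw [pdt_pdx_comm hψw, fc1]
    have E4 : pdx (fun x t => w x t * pdx ψu x t - u x t * pdx ψv x t
        + 2 * pdx u x t * ψv x t) x t = _ :=
      ((((hw.hasDerivAt_x x t).mul (hψu.pdx.hasDerivAt_x x t)).sub
        ((hu.hasDerivAt_x x t).mul (hψv.pdx.hasDerivAt_x x t))).add
        (((hu.pdx.hasDerivAt_x x t).const_mul 2).mul (hψv.hasDerivAt_x x t))).deriv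
    have s2 : pdt (pdx ψv) x t = pdx (pdx ψu) x t := by rw [pdt_pdx_comm hψv, fc3]
    have s3 : pdt (pdx w) x t = pdx (pdx u) x t := by rw [pdt_pdx_comm hw, fdb1]
    rw [s1, E4, s2, s3, hdb1 x t, hc3 x t]
    ring
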